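/- Let $P$ and $Q$ be probability distributions on $[-1,1]$ with $\mathbb{E}_{X\sim Q}[X] < 0$. Let $Q_p = (1-p)Q + p\delta_{\{1\}}$ for $p \in (0,1)$, let $\lambda^* > 0$ be such that $\log \mathbb{E}_{X \sim Q_p}[e^{\lambda^* X}] = 0$, and let $P_p$ be the exponentially tilted distribution $dP_p/dQ_p(x) = e^{\lambda^* x}$. Then $\mathrm{KL}(Q \| P_p) \le \log\frac{1}{1-p} + \lambda^* \, \mathbb{E}_{X\sim Q}[-X]$. -/

import Mathlib

open MeasureTheory

/-- KL divergence `KL(Q‖P) = ∫ log (dQ/dP) dQ`. -/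
noncomputable def klReal (Q P : Measure ℝ) : ℝ :=
  ∫ x, Real.log (Q.rnDeriv P x).toReal ∂Q

/-! Since `Q_p ≥ (1 - p) Q`, the density `dQ/dQ_p` is at most `1/(1 - p)`, so
`dQ/dP_p = e^{-λ* x} dQ/dQ_p ≤ e^{-λ* x}/(1 - p)`. Taking logarithms and integrating against `Q`
gives the bound. -/

namespace MeasureTheory

variable {α : Type*} [MeasurableSpace α]

lemma integral_le_of_ae_le_of_integral_nonneg {μ : Measure α} {f g : α → ℝ}
    (hg : Integrable g μ) (hfg : f ≤ᵐ[μ] g) (hg_nonneg : 0 ≤ ∫ x, g x ∂μ) :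
    ∫ x, f x ∂μ ≤ ∫ x, g x ∂μ := by
  by_cases hf : Integrable f μ
  · exact integral_mono_ae hf hg hfg
  · rwa [integral_undef hf]

namespace Measure

variable {μ ν : Measure α} {c : ENNReal}

lemma absolutelyContinuous_of_smul_le (hc : c ≠ 0) (h : c • μ ≤ ν) : μ ≪ ν :=
  (absolutelyContinuous_smul hc).trans (absolutelyContinuous_of_le h)

lemma rnDeriv_le_inv_of_smul_le [SigmaFinite μ] [SigmaFinite ν] (hc : c ≠ ⊤) (h : c • μ ≤ ν) :
    ∀ᵐ x ∂ν, μ.rnDeriv ν x ≤ c⁻¹ := by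
  filter_upwards [rnDeriv_smul_left_of_ne_top' μ ν hc, rnDeriv_le_one_of_le h] with x hsmul hle
  rw [hsmul] at hle
  rw [ENNReal.le_inv_iff_mul_le, mul_comm]
  exact hle

lemma log_rnDeriv_withDensity_exp_le [SigmaFinite μ] [SigmaFinite ν] {c : ℝ} (hc : 0 < c)
    (h : ENNReal.ofReal c • μ ≤ ν) {g : α → ℝ} (hg : Measurable g) :
    ∀ᵐ x ∂μ, Real.log (μ.rnDeriv (ν.withDensity fun y => ENNReal.ofReal (Real.exp (g y))) x).toReal
      ≤ Real.log (1 / c) - g x := by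
  set tilt : α → ENNReal := fun y => ENNReal.ofReal (Real.exp (g y))
  have htilt_meas : AEMeasurable tilt ν :=
    (ENNReal.measurable_ofReal.comp (Real.measurable_exp.comp hg)).aemeasurable
  have htilt_ne_zero : ∀ᵐ x ∂ν, tilt x ≠ 0 := ae_of_all _ fun x => by simp [tilt, Real.exp_pos]
  have htilt_ne_top : ∀ᵐ x ∂ν, tilt x ≠ ⊤ := ae_of_all _ fun _ => ENNReal.ofReal_ne_top
  have hμν : μ ≪ ν := absolutelyContinuous_of_smul_le (ENNReal.ofReal_pos.2 hc).ne' h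
  have hμ_tilt : μ ≪ ν.withDensity tilt :=
    hμν.trans (withDensity_absolutelyContinuous' htilt_meas htilt_ne_zero)
  have : SigmaFinite (ν.withDensity tilt) := SigmaFinite.withDensity_of_ne_top htilt_ne_top
  filter_upwards [hμν.ae_le (rnDeriv_withDensity_right μ ν htilt_meas htilt_ne_zero htilt_ne_top),
    hμν.ae_le (rnDeriv_le_inv_of_smul_le ENNReal.ofReal_ne_top h), rnDeriv_pos hμ_tilt]
    with x hform hle hpos
  have hbound : μ.rnDeriv (ν.withDensity tilt) x ≤ ENNReal.ofReal (Real.exp (-g x) / c) :=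
    calc μ.rnDeriv (ν.withDensity tilt) x = (tilt x)⁻¹ * μ.rnDeriv ν x := hform
      _ ≤ (tilt x)⁻¹ * (ENNReal.ofReal c)⁻¹ := by gcongr
      _ = ENNReal.ofReal (Real.exp (-g x) / c) := by
        rw [show tilt x = ENNReal.ofReal (Real.exp (g x)) from rfl,
          ← ENNReal.ofReal_inv_of_pos (Real.exp_pos _), ← ENNReal.ofReal_inv_of_pos hc,
          ← ENNReal.ofReal_mul (by positivity), Real.exp_neg, div_eq_mul_inv]
  have hpos_real : 0 < (μ.rnDeriv (ν.withDensity tilt) x).toReal :=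
    ENNReal.toReal_pos hpos.ne' (ne_top_of_le_ne_top ENNReal.ofReal_ne_top hbound)
  calc Real.log (μ.rnDeriv (ν.withDensity tilt) x).toReal
      ≤ Real.log (Real.exp (-g x) / c) :=
        Real.log_le_log hpos_real (ENNReal.toReal_le_of_le_ofReal (by positivity) hbound)
    _ = Real.log (1 / c) - g x := by
        rw [Real.log_div (Real.exp_pos _).ne' hc.ne', Real.log_exp, one_div, Real.log_inv]
        ring

end Measure

end MeasureTheory

theorem stmt5_general (Q : Measure ℝ) [IsProbabilityMeasure Q]
    (hmeanQ : (∫ x, x ∂Q) < 0)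
    (p : ℝ) (hp0 : 0 < p) (hp1 : p < 1)
    (Qp : Measure ℝ)
    (hQp : Qp = ENNReal.ofReal (1 - p) • Q + ENNReal.ofReal p • Measure.dirac (1 : ℝ))
    (lam : ℝ) (hlam : 0 < lam)
    (Pp : Measure ℝ)
    (hPp : Pp = Qp.withDensity (fun x => ENNReal.ofReal (Real.exp (lam * x)))) :
    klReal Q Pp ≤ Real.log (1 / (1 - p)) + lam * ∫ x, -x ∂Q := by
  have hmean_int : Integrable (fun x : ℝ => x) Q := by
    by_contra h
    simp [integral_undef h] at hmeanQ
  have : IsFiniteMeasure Qp := ⟨by simp [hQp]⟩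
  have hQ_le : ENNReal.ofReal (1 - p) • Q ≤ Qp := hQp ▸ Measure.le_add_right le_rfl
  have hlog_le := Measure.log_rnDeriv_withDensity_exp_le (g := fun x => lam * x) (by linarith)
    hQ_le (measurable_id.const_mul lam)
  have hdrift_int : Integrable (fun x : ℝ => lam * -x) Q := hmean_int.neg.const_mul lam
  have hbound_int : Integrable (fun x : ℝ => Real.log (1 / (1 - p)) + lam * -x) Q :=
    (integrable_const _).add hdrift_int
  have hbound_integral :
      ∫ x, (Real.log (1 / (1 - p)) + lam * -x) ∂Q = Real.log (1 / (1 - p)) + lam * ∫ x, -x ∂Q := by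
    rw [integral_add (integrable_const _) hdrift_int, integral_const, integral_const_mul]
    simp
  have hlog_pos : 0 < Real.log (1 / (1 - p)) :=
    Real.log_pos (by rw [lt_div_iff₀ (by linarith)]; linarith)
  have hdrift_pos : 0 < lam * ∫ x, -x ∂Q := mul_pos hlam (by rw [integral_neg]; linarith)
  rw [klReal, hPp, ← hbound_integral]
  -- a nonnegative bound also covers the junk value `0` of a non-integrable log-density
  refine integral_le_of_ae_le_of_integral_nonneg hbound_int ?_ (by linarith)
  filter_upwards [hlog_le] with x hx
  linarith

/-- For `Q` on `[-1,1]` with negative mean, `Q_p = (1-p)Q + pδ_1`, `λ* > 0` a root of the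
log-MGF of `Q_p`, and `P_p` the exponential tilt `dP_p/dQ_p = e^{λ* x}`, we have
`KL(Q‖P_p) ≤ log(1/(1-p)) + λ* E_Q[-X]`. -/
theorem stmt5 (Q : Measure ℝ) [IsProbabilityMeasure Q]
    (hsuppQ : Q (Set.Icc (-1 : ℝ) 1)ᶜ = 0)
    (hmeanQ : (∫ x, x ∂Q) < 0)
    (p : ℝ) (hp0 : 0 < p) (hp1 : p < 1)
    (Qp : Measure ℝ)
    (hQp : Qp = ENNReal.ofReal (1 - p) • Q + ENNReal.ofReal p • Measure.dirac (1 : ℝ))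
    (lam : ℝ) (hlam : 0 < lam)
    (hroot : Real.log (∫ x, Real.exp (lam * x) ∂Qp) = 0)
    (Pp : Measure ℝ)
    (hPp : Pp = Qp.withDensity (fun x => ENNReal.ofReal (Real.exp (lam * x)))) :
    klReal Q Pp ≤ Real.log (1 / (1 - p)) + lam * ∫ x, -x ∂Q :=
  stmt5_general Q hmeanQ p hp0 hp1 Qp hQp lam hlam Pp hPp
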